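/- The map f ↦ J(x^f(t), u) from X (with the uniform topology) to ℝ is continuous for each fixed t ≥ 0 and fixed u ∈ U, where x^f is the trajectory driven by f under a fixed measurable control; moreover e^{−λt}|J(x^{f₁}(t),u) − J(x^{f₂}(t),u)| ≤ L_J t e^{−(λ−L)t} ‖f₁ − f₂‖_∞. -/

import Mathlib

open MeasureTheory Set Filter Topology Real BoundedContinuousFunction

/-
The integrand `s ↦ f (x s, u s)` is integrable on every `[0, t]`: otherwise, past the first time
`T` where this fails, the interval integral takes its junk value `0`, so `x = x₀` on `(T, ∞)`; the
integrand is then a.e. strongly measurable on `(0, T)` and on `(T, ∞)`, and being bounded it is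
integrable after all. The trajectories are therefore continuous, and `φ = ‖x^{f₁} - x^{f₂}‖`
satisfies `φ s ≤ L ∫₀ˢ φ + ‖f₁ - f₂‖ s`, so Grönwall's inequality gives
`φ t ≤ ‖f₁ - f₂‖ t e^{Lt}`. Composing with the `L_J`-Lipschitz map `J` gives Lipschitz continuity
in `f`, and multiplying by `e^{-λt}` gives the estimate.
-/

theorem le_mul_exp_of_le_integral {φ : ℝ → ℝ} {K ε b : ℝ} (hφ : Continuous φ) (hK : 0 ≤ K)
    (hε : 0 ≤ ε) (hb : 0 ≤ b) (h : ∀ s ∈ Icc 0 b, φ s ≤ K * (∫ r in (0)..s, φ r) + ε * s) :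
    φ b ≤ ε * b * exp (K * b) := by
  have hΦ' : ∀ s, HasDerivAt (fun s => ∫ r in (0)..s, φ r) (φ s) s := fun s =>
    (hφ.integral_hasStrictDerivAt 0 s).hasDerivAt
  have hΦb : ∫ r in (0)..b, φ r ≤ gronwallBound 0 K (ε * b) b := by
    simpa using le_gronwallBound_of_liminf_deriv_right_le
      (intervalIntegral.continuous_primitive (fun _ _ => hφ.intervalIntegrable _ _) 0).continuousOn
      (fun s _ _ hr => (hΦ' s).hasDerivWithinAt.liminf_right_slope_le hr) (by simp)
      (fun s hs => (h s (Ico_subset_Icc_self hs)).trans (by gcongr; exact hs.2.le))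
      b ⟨hb, le_rfl⟩
  calc φ b ≤ K * (∫ r in (0)..b, φ r) + ε * b := h b ⟨hb, le_rfl⟩
    _ ≤ K * gronwallBound 0 K (ε * b) b + ε * b := by gcongr
    _ = ε * b * exp (K * b) := by
      rcases hK.eq_or_lt with rfl | hKpos
      · simp [gronwallBound_K0]
      · rw [gronwallBound_of_K_ne_0 hKpos.ne']
        field_simp
        ring

section

variable {E : Type*} [NormedAddCommGroup E]

theorem aestronglyMeasurable_Ioo_of_intervalIntegrable {g : ℝ → E} {a b : ℝ}
    (h : ∀ s ∈ Ioo a b, IntervalIntegrable g volume a s) :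
    AEStronglyMeasurable g (volume.restrict (Ioo a b)) := by
  rcases le_or_gt b a with hba | hab
  · simp [Ioo_eq_empty_of_le hba]
  obtain ⟨c, -, hc_mem, hc_lim⟩ := exists_seq_strictMono_tendsto' hab
  have hcover : Ioo a b ⊆ ⋃ k, Ioc a (c k) := fun s hs =>
    have ⟨k, hk⟩ := (hc_lim.eventually (lt_mem_nhds hs.2)).exists
    mem_iUnion.2 ⟨k, hs.1, hk.le⟩
  exact (aestronglyMeasurable_iUnion_iff.2 fun k =>
    (h (c k) (hc_mem k)).1.aestronglyMeasurable).mono_set hcover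

variable [NormedSpace ℝ E]

theorem continuousOn_of_eq_add_integral {g : ℝ → E} {x : ℝ → E} {x₀ : E}
    (hx : ∀ t ≥ 0, x t = x₀ + ∫ s in (0)..t, g s)
    (hg : ∀ t ≥ 0, IntervalIntegrable g volume 0 t) : ContinuousOn x (Ici 0) := by
  intro t (ht : 0 ≤ t)
  have hprim : ContinuousOn (fun r => x₀ + ∫ s in (0)..r, g s) (Icc 0 (t + 1)) := by
    have := intervalIntegral.continuousOn_primitive_interval' (hg (t + 1) (by linarith))
      left_mem_uIcc
    rw [uIcc_of_le (by linarith)] at this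
    exact continuousOn_const.add this
  have hx' : ContinuousOn x (Icc 0 (t + 1)) := hprim.congr fun y hy => hx y hy.1
  have hnhds : Icc 0 (t + 1) ∈ 𝓝[Ici 0] t := by
    rw [← Ici_inter_Iic]
    exact inter_mem_nhdsWithin _ (Iic_mem_nhds (by linarith))
  exact (hx' t ⟨ht, by linarith⟩).mono_of_mem_nhdsWithin hnhds

theorem intervalIntegrable_of_eq_add_integral {F : ℝ → E → E} {M : ℝ} {x : ℝ → E} {x₀ : E}
    (hF_bdd : ∀ s y, ‖F s y‖ ≤ M) (hF_meas : AEStronglyMeasurable (fun s => F s x₀))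
    (hx : ∀ t ≥ 0, x t = x₀ + ∫ s in (0)..t, F s (x s)) {t : ℝ} (ht : 0 ≤ t) :
    IntervalIntegrable (fun s => F s (x s)) volume 0 t := by
  set g := fun s => F s (x s)
  have of_meas : AEStronglyMeasurable g (volume.restrict (Ioi 0)) →
      ∀ t ≥ 0, IntervalIntegrable g volume 0 t := fun hg t ht => by
    rw [intervalIntegrable_iff_integrableOn_Ioc_of_le ht]
    exact (integrableOn_const measure_Ioc_lt_top.ne).mono' (hg.mono_set Ioc_subset_Ioi_self)
      (ae_of_all _ fun s => hF_bdd s (x s))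
  by_contra hbad
  set N := {t | 0 ≤ t ∧ ¬ IntervalIntegrable g volume 0 t}
  have hN : N.Nonempty := ⟨t, ht, hbad⟩
  have hN_bdd : BddBelow N := ⟨0, fun s hs => hs.1⟩
  set T := sInf N
  have below : ∀ s ∈ Ioo 0 T, IntervalIntegrable g volume 0 s := fun s hs => by
    by_contra hs'
    exact (csInf_le hN_bdd ⟨hs.1.le, hs'⟩).not_gt hs.2
  have above : ∀ s ∈ Ioi T, g s = F s x₀ := fun s hs => by
    obtain ⟨r, ⟨hr0, hr⟩, hrs⟩ := exists_lt_of_csInf_lt hN hs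
    have hs' : ¬ IntervalIntegrable g volume 0 s := fun hs' =>
      hr (hs'.mono_set (uIcc_subset_uIcc_left (mem_uIcc_of_le hr0 hrs.le)))
    show F s (x s) = F s x₀
    rw [hx s (hr0.trans hrs.le), intervalIntegral.integral_undef hs', add_zero]
  have hmeas : AEStronglyMeasurable g (volume.restrict (Ioi 0)) := by
    have hIoi : AEStronglyMeasurable g (volume.restrict (Ici T)) := by
      rw [Measure.restrict_congr_set Ioi_ae_eq_Ici.symm]
      exact hF_meas.restrict.congr ((ae_restrict_iff' measurableSet_Ioi).2
        (ae_of_all _ fun s hs => (above s hs).symm))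
    refine (aestronglyMeasurable_union_iff.2
      ⟨aestronglyMeasurable_Ioo_of_intervalIntegrable below, hIoi⟩).mono_set fun s hs => ?_
    rcases lt_or_ge s T with h | h
    exacts [Or.inl ⟨hs, h⟩, Or.inr h]
  exact hbad (of_meas hmeas t ht)

theorem norm_sub_le_of_eq_add_integral {F₁ F₂ : ℝ → E → E} {L ε : ℝ} {x₁ x₂ : ℝ → E} {x₀ : E}
    (hL : 0 ≤ L) (hF₂ : ∀ s y z, ‖F₂ s y - F₂ s z‖ ≤ L * ‖y - z‖)
    (hF : ∀ s y, ‖F₁ s y - F₂ s y‖ ≤ ε)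
    (hx₁ : ∀ t ≥ 0, x₁ t = x₀ + ∫ s in (0)..t, F₁ s (x₁ s))
    (hx₂ : ∀ t ≥ 0, x₂ t = x₀ + ∫ s in (0)..t, F₂ s (x₂ s))
    (hg₁ : ∀ t ≥ 0, IntervalIntegrable (fun s => F₁ s (x₁ s)) volume 0 t)
    (hg₂ : ∀ t ≥ 0, IntervalIntegrable (fun s => F₂ s (x₂ s)) volume 0 t) {t : ℝ} (ht : 0 ≤ t) :
    ‖x₁ t - x₂ t‖ ≤ ε * t * exp (L * t) := by
  have hε : 0 ≤ ε := (norm_nonneg _).trans (hF 0 x₀)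
  set φ := fun s => ‖x₁ (max s 0) - x₂ (max s 0)‖
  have hφ_cont : Continuous φ := by
    have hmax : Continuous fun s : ℝ => max s 0 := continuous_id.max continuous_const
    exact (((continuousOn_of_eq_add_integral hx₁ hg₁).comp_continuous hmax
      fun s => le_max_right s 0).sub ((continuousOn_of_eq_add_integral hx₂ hg₂).comp_continuous
      hmax fun s => le_max_right s 0)).norm
  have hφ : ∀ s ≥ 0, φ s = ‖x₁ s - x₂ s‖ := fun s hs => by simp only [φ, max_eq_left hs]
  refine hφ t ht ▸ le_mul_exp_of_le_integral hφ_cont hL hε ht fun s ⟨hs, _⟩ => ?_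
  have hpt : ∀ r ∈ Ioc 0 s, ‖F₁ r (x₁ r) - F₂ r (x₂ r)‖ ≤ L * φ r + ε := fun r hr => by
    calc ‖F₁ r (x₁ r) - F₂ r (x₂ r)‖
        = ‖(F₁ r (x₁ r) - F₂ r (x₁ r)) + (F₂ r (x₁ r) - F₂ r (x₂ r))‖ := by abel_nf
      _ ≤ ε + L * ‖x₁ r - x₂ r‖ := (norm_add_le _ _).trans (add_le_add (hF _ _) (hF₂ _ _ _))
      _ = L * φ r + ε := by rw [hφ r hr.1.le]; ring
  calc φ s = ‖∫ r in (0)..s, (F₁ r (x₁ r) - F₂ r (x₂ r))‖ := by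
        rw [hφ s hs, hx₁ s hs, hx₂ s hs, add_sub_add_left_eq_sub,
          intervalIntegral.integral_sub (hg₁ s hs) (hg₂ s hs)]
    _ ≤ ∫ r in (0)..s, (L * φ r + ε) :=
        intervalIntegral.norm_integral_le_of_norm_le hs (ae_of_all _ hpt)
          ((by fun_prop : Continuous fun r => L * φ r + ε).intervalIntegrable _ _)
    _ = L * (∫ r in (0)..s, φ r) + ε * s := by
        rw [intervalIntegral.integral_add (f := fun r => L * φ r)
          ((continuous_const.mul hφ_cont).intervalIntegrable _ _)
          intervalIntegrable_const, intervalIntegral.integral_const_mul,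
          intervalIntegral.integral_const]
        simp [mul_comm]

end

theorem stmt2_general {n m : ℕ} (L L_J lam : ℝ) (hL : 0 < L) (hLJ : 0 < L_J)
    (Us : Set (EuclideanSpace ℝ (Fin m)))
    (X : Set ((EuclideanSpace ℝ (Fin n) × ↥Us) →ᵇ EuclideanSpace ℝ (Fin n)))
    (hlip : ∀ f ∈ X, ∀ p q : EuclideanSpace ℝ (Fin n) × ↥Us,
      ‖f p - f q‖ ≤ L * (‖p.1 - q.1‖ +
        ‖(p.2 : EuclideanSpace ℝ (Fin m)) - (q.2 : EuclideanSpace ℝ (Fin m))‖))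
    (J : EuclideanSpace ℝ (Fin n) → EuclideanSpace ℝ (Fin m) → ℝ)
    (hJLip : ∀ v ∈ Us, LipschitzWith (Real.toNNReal L_J) fun x => J x v)
    (u : ℝ → ↥Us) (hu_meas : Measurable u) (x₀ : EuclideanSpace ℝ (Fin n))
    (traj : ((EuclideanSpace ℝ (Fin n) × ↥Us) →ᵇ EuclideanSpace ℝ (Fin n)) →
      ℝ → EuclideanSpace ℝ (Fin n))
    (htraj : ∀ f ∈ X, ∀ t ≥ (0:ℝ), traj f t = x₀ + ∫ s in (0:ℝ)..t, f (traj f s, u s)) :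
    (∀ t ≥ (0:ℝ), ∀ v ∈ Us, ContinuousOn (fun f => J (traj f t) v) X) ∧
    (∀ t ≥ (0:ℝ), ∀ v ∈ Us, ∀ f₁ ∈ X, ∀ f₂ ∈ X,
      Real.exp (-lam * t) * |J (traj f₁ t) v - J (traj f₂ t) v| ≤
        L_J * t * Real.exp (-(lam - L) * t) * ‖f₁ - f₂‖) := by
  have hint : ∀ f ∈ X, ∀ t ≥ (0:ℝ), IntervalIntegrable (fun s => f (traj f s, u s)) volume 0 t :=
    fun f hf t ht => intervalIntegrable_of_eq_add_integral (F := fun s y => f (y, u s))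
      (fun _ _ => f.norm_coe_le_norm _)
      (f.continuous.measurable.comp (measurable_const.prodMk hu_meas)).aestronglyMeasurable
      (htraj f hf) ht
  have hJ : ∀ t ≥ (0:ℝ), ∀ v ∈ Us, ∀ f₁ ∈ X, ∀ f₂ ∈ X,
      dist (J (traj f₁ t) v) (J (traj f₂ t) v) ≤ L_J * (t * exp (L * t)) * ‖f₁ - f₂‖ := by
    intro t ht v hv f₁ hf₁ f₂ hf₂
    have htraj_le : ‖traj f₁ t - traj f₂ t‖ ≤ ‖f₁ - f₂‖ * t * exp (L * t) :=
      norm_sub_le_of_eq_add_integral hL.le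
        (fun s y z => by simpa using hlip f₂ hf₂ (y, u s) (z, u s))
        (fun s y => (f₁ - f₂).norm_coe_le_norm (y, u s))
        (htraj f₁ hf₁) (htraj f₂ hf₂) (hint f₁ hf₁) (hint f₂ hf₂) ht
    calc dist (J (traj f₁ t) v) (J (traj f₂ t) v)
        ≤ L_J * ‖traj f₁ t - traj f₂ t‖ := by
          simpa [Real.coe_toNNReal L_J hLJ.le, dist_eq_norm] using
            (hJLip v hv).dist_le_mul (traj f₁ t) (traj f₂ t)
      _ ≤ L_J * (t * exp (L * t)) * ‖f₁ - f₂‖ :=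
          (mul_le_mul_of_nonneg_left htraj_le hLJ.le).trans_eq (by ring)
  refine ⟨fun t ht v hv => ?_, fun t ht v hv f₁ hf₁ f₂ hf₂ => ?_⟩
  · exact (LipschitzOnWith.of_dist_le' fun f₁ hf₁ f₂ hf₂ => by
      simpa only [dist_eq_norm] using hJ t ht v hv f₁ hf₁ f₂ hf₂).continuousOn
  · calc exp (-lam * t) * |J (traj f₁ t) v - J (traj f₂ t) v|
        ≤ exp (-lam * t) * (L_J * (t * exp (L * t)) * ‖f₁ - f₂‖) := by
          gcongr
          exact hJ t ht v hv f₁ hf₁ f₂ hf₂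
      _ = L_J * t * exp (-(lam - L) * t) * ‖f₁ - f₂‖ := by
          rw [show -(lam - L) * t = -lam * t + L * t by ring, exp_add]
          ring

/-- continuity of `f ↦ J(x^f(t), u)` in the uniform topology,
together with the quantitative estimate
`e^{-λt}|J(x^{f₁}(t),u) - J(x^{f₂}(t),u)| ≤ L_J t e^{-(λ-L)t} ‖f₁ - f₂‖_∞`. -/
theorem stmt2 {n m : ℕ} (L C L_J lam : ℝ) (hL : 0 < L) (hlam : L < lam) (hLJ : 0 < L_J)
    (Us : Set (EuclideanSpace ℝ (Fin m))) (hUcpt : IsCompact Us)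
    (X : Set ((EuclideanSpace ℝ (Fin n) × ↥Us) →ᵇ EuclideanSpace ℝ (Fin n)))
    (hbound : ∀ f ∈ X, ∀ p, ‖f p‖ ≤ C)
    (hlip : ∀ f ∈ X, ∀ p q : EuclideanSpace ℝ (Fin n) × ↥Us,
      ‖f p - f q‖ ≤ L * (‖p.1 - q.1‖ +
        ‖(p.2 : EuclideanSpace ℝ (Fin m)) - (q.2 : EuclideanSpace ℝ (Fin m))‖))
    (J : EuclideanSpace ℝ (Fin n) → EuclideanSpace ℝ (Fin m) → ℝ)
    (hJcont : Continuous fun p : EuclideanSpace ℝ (Fin n) × EuclideanSpace ℝ (Fin m) =>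
      J p.1 p.2)
    (hJLip : ∀ v ∈ Us, LipschitzWith (Real.toNNReal L_J) fun x => J x v)
    (u : ℝ → ↥Us) (hu_meas : Measurable u) (x₀ : EuclideanSpace ℝ (Fin n))
    (traj : ((EuclideanSpace ℝ (Fin n) × ↥Us) →ᵇ EuclideanSpace ℝ (Fin n)) →
      ℝ → EuclideanSpace ℝ (Fin n))
    (htraj : ∀ f ∈ X, ∀ t ≥ (0:ℝ), traj f t = x₀ + ∫ s in (0:ℝ)..t, f (traj f s, u s)) :
    (∀ t ≥ (0:ℝ), ∀ v ∈ Us, ContinuousOn (fun f => J (traj f t) v) X) ∧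
    (∀ t ≥ (0:ℝ), ∀ v ∈ Us, ∀ f₁ ∈ X, ∀ f₂ ∈ X,
      Real.exp (-lam * t) * |J (traj f₁ t) v - J (traj f₂ t) v| ≤
        L_J * t * Real.exp (-(lam - L) * t) * ‖f₁ - f₂‖) :=
  stmt2_general L L_J lam hL hLJ Us X hlip J hJLip u hu_meas x₀ traj htraj
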